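/- arXiv:1312.7509 — 2 statements merged into one kernel-verified Lean document; each statement's English description precedes it below -/
import Mathlib

section
/- Let V be an n-dimensional real inner product space of Lorentzian signature, W a finite-dimensional real vector space with dim W > (1/2)·dim S for some vector space S, and suppose for each v ∈ V there is a linear map c(v) : W → S such that c(v) injective whenever v is non-null (spacelike or timelike). If φ : W × W → V is the associated symmetric bilinear map with g(φ(w,w'), v) = B(w, c(v) w') for a nondegenerate pairing B, then every vector orthogonal to the image of φ is null. -/
/-- Abstract form of the key step of the homogeneity argument.  `V` carries a
symmetric bilinear form `g` of Lorentzian signature (the Lorentzian nature is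
only used through the hypothesis `hinj` that Clifford multiplication `c v` by
any non-null vector `v` is injective).  `W` is a subspace of Killing spinors
with `dim W > ½ dim S`, `B` is a nondegenerate pairing between `W` and `S`, and
`φ : W × W → V` is the symmetric squaring map, related to `c` and `B` by
`g (φ w w') v = B w (c v w')`.  Then every vector `v` orthogonal to the image
of `φ` is null. -/
theorem stmt_3 {V W S : Type*}
    [AddCommGroup V] [Module ℝ V]
    [AddCommGroup W] [Module ℝ W] [FiniteDimensional ℝ W]
    [AddCommGroup S] [Module ℝ S] [FiniteDimensional ℝ S]
    (g : V →ₗ[ℝ] V →ₗ[ℝ] ℝ) (hgsymm : ∀ x y, g x y = g y x)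
    (hdim : Module.finrank ℝ S < 2 * Module.finrank ℝ W)
    (c : V → W →ₗ[ℝ] S)
    (hinj : ∀ v : V, g v v ≠ 0 → Function.Injective (c v))
    (B : W →ₗ[ℝ] S →ₗ[ℝ] ℝ)
    (hBleft : ∀ w : W, (∀ s : S, B w s = 0) → w = 0)
    (hBright : ∀ s : S, (∀ w : W, B w s = 0) → s = 0)
    (φ : W →ₗ[ℝ] W →ₗ[ℝ] V) (hφsymm : ∀ w w', φ w w' = φ w' w)
    (hcomp : ∀ (v : V) (w w' : W), g (φ w w') v = B w (c v w'))
    (v : V) (hperp : ∀ w w' : W, g (φ w w') v = 0) :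
    g v v = 0 := by
  by_contra h
  have hc : ∀ w' : W, c v w' = 0 := fun w' =>
    hBright _ (fun w => by rw [← hcomp]; exact hperp w w')
  have hW : ∀ w' : W, w' = 0 := fun w' =>
    hinj v h (by rw [hc, map_zero])
  have : Subsingleton W := ⟨fun a b => by rw [hW a, hW b]⟩
  have : Module.finrank ℝ W = 0 := Module.finrank_zero_of_subsingleton
  omega
end

section
/- Let V be a 6-dimensional Lorentzian vector space and φ : W × W → V a symmetric bilinear map on a real vector space W such that (i) φ(w,w) is null for every w ∈ W, and (ii) every vector orthogonal to the image of φ is null. Then φ is surjective onto V. -/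
/-- The Minkowski bilinear form of signature (5,1) on `Fin 6 → ℝ`,
with the 0th coordinate timelike. -/
noncomputable def minkowski6 (x y : Fin 6 → ℝ) : ℝ :=
  ∑ a : Fin 6, (if a = 0 then (-1 : ℝ) else 1) * x a * y a

lemma mink_expand (x y : Fin 6 → ℝ) :
    minkowski6 x y = -(x 0 * y 0) + ∑ i : Fin 5, x i.succ * y i.succ := by
  rw [minkowski6, Fin.sum_univ_succ]
  simp [Fin.succ_ne_zero]


lemma mink_symm (x y : Fin 6 → ℝ) : minkowski6 x y = minkowski6 y x := by
  unfold minkowski6; exact Finset.sum_congr rfl (fun i _ => by ring)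

lemma mink_smul_left (c : ℝ) (x y : Fin 6 → ℝ) :
    minkowski6 (c • x) y = c * minkowski6 x y := by
  unfold minkowski6; rw [Finset.mul_sum]
  exact Finset.sum_congr rfl (fun i _ => by simp; ring)

lemma sum_sq_zero {n : ℕ} (f : Fin n → ℝ) (h : ∑ i, f i ^ 2 = 0) : ∀ i, f i = 0 := by
  intro i
  have := (Finset.sum_eq_zero_iff_of_nonneg (fun j _ => sq_nonneg (f j))).mp h i (Finset.mem_univ i)
  exact pow_eq_zero_iff (by norm_num) |>.mp this

lemma null_orth_dep (x y : Fin 6 → ℝ) (hx : minkowski6 x x = 0)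
    (hy : minkowski6 y y = 0) (hxy : minkowski6 x y = 0) (hx0 : x ≠ 0) :
    ∃ c : ℝ, y = c • x := by
  rw [mink_expand] at hx hy hxy
  have hA : ∑ i : Fin 5, x i.succ * x i.succ = x 0 * x 0 := by linarith
  have hB : ∑ i : Fin 5, x i.succ * y i.succ = x 0 * y 0 := by linarith
  have hC : ∑ i : Fin 5, y i.succ * y i.succ = y 0 * y 0 := by linarith
  have key : ∑ i : Fin 5, (x 0 * y i.succ - y 0 * x i.succ) ^ 2 = 0 := by
    have expand : ∀ i ∈ (Finset.univ : Finset (Fin 5)), (x 0 * y i.succ - y 0 * x i.succ) ^ 2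
        = x 0 ^ 2 * (y i.succ * y i.succ) - 2 * (x 0 * y 0) * (x i.succ * y i.succ)
          + y 0 ^ 2 * (x i.succ * x i.succ) := fun i _ => by ring
    rw [Finset.sum_congr rfl expand, Finset.sum_add_distrib, Finset.sum_sub_distrib,
      ← Finset.mul_sum, ← Finset.mul_sum, ← Finset.mul_sum, hA, hB, hC]
    ring
  have hterm := sum_sq_zero _ key
  have hx00 : x 0 ≠ 0 := by
    intro h0
    apply hx0
    have hAz : ∑ i : Fin 5, x i.succ ^ 2 = 0 := by
      have e2 : ∀ i ∈ (Finset.univ : Finset (Fin 5)), x i.succ ^ 2 = x i.succ * x i.succ := fun i _ => sq (x i.succ)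
      rw [Finset.sum_congr rfl e2, hA, h0]
      ring
    have := sum_sq_zero _ hAz
    funext a
    refine Fin.cases ?_ ?_ a
    · exact h0
    · exact this
  refine ⟨y 0 / x 0, funext fun a => ?_⟩
  refine Fin.cases ?_ ?_ a
  · show y 0 = y 0 / x 0 * x 0
    field_simp
  · intro i
    have h := hterm i
    have : x 0 * y i.succ = y 0 * x i.succ := by nlinarith [sq_nonneg (x 0 * y i.succ - y 0 * x i.succ)]
    show y i.succ = y 0 / x 0 * x i.succ
    field_simp
    linarith

lemma exists_rep (f : (Fin 6 → ℝ) →ₗ[ℝ] ℝ) :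
    ∃ n : Fin 6 → ℝ, ∀ v : Fin 6 → ℝ, minkowski6 v n = f v := by
  refine ⟨fun a => (if a = 0 then (-1 : ℝ) else 1) * f (fun j => if a = j then 1 else 0),
    fun v => ?_⟩
  rw [LinearMap.pi_apply_eq_sum_univ f v, minkowski6]
  refine Finset.sum_congr rfl fun a _ => ?_
  have hε2 : (if a = 0 then (-1 : ℝ) else 1) * (if a = 0 then (-1 : ℝ) else 1) = 1 := by
    by_cases h : a = 0 <;> simp [h]
  simp only [smul_eq_mul]
  calc (if a = 0 then (-1 : ℝ) else 1) * v a
        * ((if a = 0 then (-1 : ℝ) else 1) * f fun j => if a = j then 1 else 0)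
      = ((if a = 0 then (-1 : ℝ) else 1) * (if a = 0 then (-1 : ℝ) else 1))
        * (v a * f fun j => if a = j then 1 else 0) := by ring
    _ = v a * f fun j => if a = j then 1 else 0 := by rw [hε2, one_mul]

/-- Let `φ : W × W → V` be a symmetric bilinear map into a 6-dimensional
Lorentzian vector space such that (i) every `φ(w,w)` is null and (ii) every
vector orthogonal to the image of `φ` is null.  Then `φ` is surjective onto
`V`, i.e. its image spans `V`. -/
theorem stmt_4 {W : Type*} [AddCommGroup W] [Module ℝ W]
    (φ : W →ₗ[ℝ] W →ₗ[ℝ] (Fin 6 → ℝ))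
    (hsymm : ∀ w w', φ w w' = φ w' w)
    (hnull : ∀ w : W, minkowski6 (φ w w) (φ w w) = 0)
    (hperp : ∀ v : Fin 6 → ℝ, (∀ w w' : W, minkowski6 (φ w w') v = 0) →
      minkowski6 v v = 0) :
    Submodule.span ℝ (Set.range fun p : W × W => φ p.1 p.2) = ⊤ := by
  by_contra hS
  set S := Submodule.span ℝ (Set.range fun p : W × W => φ p.1 p.2) with hSdef
  obtain ⟨x, hxS⟩ : ∃ x, x ∉ S := by
    by_contra h
    push_neg at h
    exact hS (Submodule.eq_top_iff'.mpr h)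
  have hmk : (Submodule.Quotient.mk x : (Fin 6 → ℝ) ⧸ S) ≠ 0 := by
    simpa [Submodule.Quotient.mk_eq_zero] using hxS
  obtain ⟨g, hg⟩ : ∃ g : Module.Dual ℝ ((Fin 6 → ℝ) ⧸ S),
      g (Submodule.Quotient.mk x) ≠ 0 := by
    by_contra h
    push_neg at h
    exact hmk ((Module.forall_dual_apply_eq_zero_iff ℝ _).mp h)
  obtain ⟨n, hrep⟩ := exists_rep (g.comp S.mkQ)
  have hfS : ∀ s ∈ S, minkowski6 s n = 0 := by
    intro s hs
    rw [hrep]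
    simp [Submodule.mkQ_apply, (Submodule.Quotient.mk_eq_zero S).mpr hs]
  have hmem : ∀ w w', φ w w' ∈ S := fun w w' =>
    Submodule.subset_span ⟨(w, w'), rfl⟩
  have horth : ∀ w w', minkowski6 (φ w w') n = 0 := fun w w' =>
    hfS _ (hmem w w')
  have hn0 : n ≠ 0 := by
    intro h
    apply hg
    have h2 : minkowski6 x n = (g.comp S.mkQ) x := hrep x
    rw [h] at h2
    have h3 : minkowski6 x 0 = 0 := by simp [minkowski6]
    rw [h3] at h2
    simpa using h2.symm
  have hnn : minkowski6 n n = 0 := hperp n horth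
  have hdiag : ∀ w, ∃ c : ℝ, φ w w = c • n := fun w =>
    null_orth_dep n (φ w w) hnn (hnull w) ((mink_symm n (φ w w)).trans (horth w w)) hn0
  have hall : ∀ w w', ∃ c : ℝ, φ w w' = c • n := by
    intro w w'
    obtain ⟨c1, hc1⟩ := hdiag (w + w')
    obtain ⟨c2, hc2⟩ := hdiag w
    obtain ⟨c3, hc3⟩ := hdiag w'
    have hexp : φ (w + w') (w + w') = φ w w + φ w w' + φ w w' + φ w' w' := by
      rw [map_add]
      simp only [LinearMap.add_apply, map_add]
      rw [hsymm w' w]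
      abel
    rw [hc1, hc2, hc3] at hexp
    have h' : φ w w' + φ w w' = c1 • n - c2 • n - c3 • n := by
      rw [hexp]; abel
    have h2 : (2 : ℝ) • φ w w' = (c1 - c2 - c3) • n := by
      rw [two_smul, h', sub_smul, sub_smul]
    refine ⟨(c1 - c2 - c3) / 2, ?_⟩
    calc φ w w' = (2 : ℝ)⁻¹ • ((2 : ℝ) • φ w w') := by
          rw [smul_smul]; norm_num
      _ = (2 : ℝ)⁻¹ • ((c1 - c2 - c3) • n) := by rw [h2]
      _ = ((c1 - c2 - c3) / 2) • n := by rw [smul_smul]; ring_nf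
  have hvnull : ∀ v : Fin 6 → ℝ, minkowski6 n v = 0 → minkowski6 v v = 0 := by
    intro v hv
    refine hperp v fun w w' => ?_
    obtain ⟨c, hc⟩ := hall w w'
    rw [hc, mink_smul_left, hv, mul_zero]
  have f20 : (2 : Fin 6) ≠ 0 := by decide
  have f50 : (5 : Fin 6) ≠ 0 := by decide
  have f10 : (1 : Fin 6) ≠ 0 := by decide
  have f30 : (3 : Fin 6) ≠ 0 := by decide
  have f40 : (4 : Fin 6) ≠ 0 := by decide
  have e5 : ∀ (a b c d e f' : ℝ), ![a, b, c, d, e, f'] 5 = f' := fun _ _ _ _ _ _ => rfl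
  by_cases h1 : n 1 = 0
  · have := hvnull ![0, 1, 0, 0, 0, 0] ?_
    · rw [minkowski6, Fin.sum_univ_six] at this
      simp [f10, f20, f30, f40, f50, Matrix.cons_val_succ, e5] at this
    · rw [minkowski6, Fin.sum_univ_six]
      simp [f10, f20, f30, f40, f50, h1, Matrix.cons_val_succ, e5]
  · have := hvnull ![0, n 2, -(n 1), 0, 0, 0] ?_
    · rw [minkowski6, Fin.sum_univ_six] at this
      simp [f10, f20, f30, f40, f50, Matrix.cons_val_succ, e5] at this
      exact h1 (by nlinarith [sq_nonneg (n 1), sq_nonneg (n 2)])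
    · rw [minkowski6, Fin.sum_univ_six]
      simp [f10, f20, f30, f40, f50, Matrix.cons_val_succ, e5]
      ring
end
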